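/- The descent set of the Rothe diagram D(w) coincides with the descent set of the permutation w: D(w) has a descent at k (in the diagram sense) if and only if w(k) > w(k+1). -/
import Mathlib


/-- The Rothe diagram of a permutation `w` of the positive integers. -/
def RotheDiagram (w : Equiv.Perm ℕ+) : Set (ℕ+ × ℕ+) :=
  {p | p.2 < w p.1 ∧ p.1 < w.symm p.2}

/-- Column `j` of the diagram `D` witnesses a descent at `k`: the largest row index
appearing in column `j` is `k`, and every other column can be placed either to the
left (it is `k`-full: a box in row `k` implies a box in row `k+1`) or to the right
(its intersection with rows `{1,…,k+1}` is contained in column `j`). -/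
def IsDescentCol (D : Set (ℕ+ × ℕ+)) (k j : ℕ+) : Prop :=
  (k, j) ∈ D ∧ (∀ i : ℕ+, (i, j) ∈ D → i ≤ k) ∧
    ∀ j' : ℕ+, j' ≠ j →
      (((k, j') ∈ D → (k + 1, j') ∈ D) ∨
        ∀ i : ℕ+, (i, j') ∈ D → i ≤ k + 1 → (i, j) ∈ D)

/-- A diagram `D` has a descent at `k` (possibly after reordering columns). -/
def HasDiagramDescent (D : Set (ℕ+ × ℕ+)) (k : ℕ+) : Prop :=
  ∃ j : ℕ+, IsDescentCol D k j

/-- The descent set of the Rothe diagram `D(w)` coincides with the descent set of the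
permutation `w`: `D(w)` has a descent at `k` iff `w(k) > w(k+1)`. -/
theorem stmt9 (w : Equiv.Perm ℕ+) (hfin : {i | w i ≠ i}.Finite) (k : ℕ+) :
    HasDiagramDescent (RotheDiagram w) k ↔ w (k + 1) < w k := by
  have hne : w (k + 1) ≠ w k := fun h => by
    have := w.injective h
    exact absurd this (ne_of_gt (PNat.lt_add_one_iff.mpr le_rfl))
  constructor
  · rintro ⟨j, ⟨hj1, hj2⟩, hmax, -⟩
    rcases lt_or_gt_of_ne hne with h | h
    · exact h
    · exfalso
      have hnm : (k + 1, j) ∉ RotheDiagram w := fun hm => by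
        have := hmax (k + 1) hm
        exact absurd this (by simp [PNat.add_one_le_iff])
      have hjlt : j < w (k + 1) := lt_trans hj1 h
      have hle : w.symm j ≤ k + 1 := by
        by_contra hcon
        exact hnm ⟨hjlt, lt_of_not_ge hcon⟩
      have heq : w.symm j = k + 1 := le_antisymm hle (PNat.add_one_le_iff.mpr hj2)
      have : j = w (k + 1) := by
        have := congrArg w heq
        simpa using this
      rw [this] at hjlt
      exact lt_irrefl _ hjlt
  · intro h
    refine ⟨w (k + 1), ⟨⟨h, ?_⟩, ?_, ?_⟩⟩
    · simp [PNat.lt_add_one_iff]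
    · intro i hi
      have : i < w.symm (w (k + 1)) := hi.2
      rw [Equiv.symm_apply_apply] at this
      exact PNat.lt_add_one_iff.mp this
    · intro j' hj'
      rcases lt_or_gt_of_ne hj' with hlt | hgt
      · left
        rintro ⟨h1, h2⟩
        refine ⟨hlt, ?_⟩
        have hk1 : k + 1 ≤ w.symm j' := PNat.add_one_le_iff.mpr h2
        refine lt_of_le_of_ne hk1 (fun heq => ?_)
        apply hj'
        have := congrArg w heq.symm
        simpa using this
      · right
        rintro i ⟨h1, h2⟩ hik1
        refine ⟨lt_trans hgt h1, ?_⟩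
        rw [Equiv.symm_apply_apply]
        refine lt_of_le_of_ne hik1 (fun heq => ?_)
        rw [heq] at h1
        exact lt_irrefl _ (lt_trans hgt h1)
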